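/- Let (C, J, P) be a geometric context. Open immersions of sheaves are stable under composition: if f : F → G and g : G → H are open immersions in Sh(C, J), then g ∘ f is an open immersion. -/

import Mathlib

open CategoryTheory CategoryTheory.Limits

universe u

namespace GeomCtx

variable {C : Type u} [SmallCategory C]

/-- An arrow `f` of a category is *cartesian* if pullbacks of arbitrary morphisms
along `f` exist. -/
def CartesianArrow {X Y : C} (f : X ⟶ Y) : Prop :=
  ∀ ⦃Z : C⦄ (g : Z ⟶ Y), HasPullback f g

/-- A family of arrows `(ρ i : Ui i ⟶ X)` is a `J`-covering if the sieve it
generates is a `J`-covering sieve. -/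
def IsJCover (J : GrothendieckTopology C) {X : C} {I : Type u} (Ui : I → C)
    (ρ : ∀ i, Ui i ⟶ X) : Prop :=
  Sieve.generate (Presieve.ofArrows Ui ρ) ∈ J X

/-- A Grothendieck pretopology (in the sense that does not presuppose the existence of
all pullbacks in `C`): a collection of covering families consisting of cartesian arrows,
stable under pullback, transitive, and containing the isomorphisms. -/
structure IsPretopology (Cov : ∀ U : C, Set (Presieve U)) : Prop where
  cartesian : ∀ ⦃U : C⦄, ∀ R ∈ Cov U, ∀ ⦃V : C⦄ (f : V ⟶ U), R f → CartesianArrow f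
  pullback_stable : ∀ ⦃U V : C⦄ (g : V ⟶ U), ∀ R ∈ Cov U,
    ∃ S ∈ Cov V, ∀ ⦃W : C⦄ (f : W ⟶ V), S f →
      ∃ (Z : C) (r : Z ⟶ U) (h : W ⟶ Z), R r ∧ IsPullback h f r g
  trans : ∀ ⦃U : C⦄ (R : Presieve U), R ∈ Cov U →
    ∀ (T : ∀ ⦃V : C⦄ ⦃f : V ⟶ U⦄, R f → Presieve V),
      (∀ ⦃V : C⦄ ⦃f : V ⟶ U⦄ (hf : R f), T hf ∈ Cov V) →
      R.bind T ∈ Cov U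
  has_isos : ∀ ⦃U V : C⦄ (f : V ⟶ U) [IsIso f], Presieve.singleton f ∈ Cov U

/-- A Grothendieck topology is generated by a pretopology if its covering sieves are
exactly the sieves containing a sieve generated by a covering family of the pretopology. -/
def GeneratedByPretopology (J : GrothendieckTopology C) : Prop :=
  ∃ Cov : ∀ U : C, Set (Presieve U), IsPretopology Cov ∧
    ∀ (U : C) (S : Sieve U), S ∈ J U ↔ ∃ R ∈ Cov U, Sieve.generate R ≤ S

/-- A *geometric context* `(C, J, P)`: a small category `C` with finite products, a
subcanonical Grothendieck topology `J` generated by a pretopology, and an admissible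
class `P` of arrows of `C` which is `J`-local and locally cartesian, and such that `J`
is `P`-generated. -/
structure IsGeometricContext (J : GrothendieckTopology C) (P : MorphismProperty C) : Prop where
  /-- (GC1) `C` admits finite products. -/
  hasFiniteProducts : HasFiniteProducts C
  /-- (GC2a) `J` is subcanonical: every representable presheaf is a `J`-sheaf. -/
  subcanonical : ∀ U : C, Presheaf.IsSheaf J (yoneda.obj U)
  /-- (GC2b) `J` is generated by a Grothendieck pretopology. -/
  pretopologyGenerated : GeneratedByPretopology J
  /-- (GC3a) `P` contains all identities. -/
  id_mem : ∀ U : C, P (𝟙 U)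
  /-- (GC3b) `P` is stable under base change. -/
  stableUnderBaseChange : ∀ ⦃U' V' U V : C⦄ (f' : U' ⟶ V') (g' : U' ⟶ U)
    (g : V' ⟶ V) (f : U ⟶ V), IsPullback f' g' g f → P f → P f'
  /-- (GC3c) `P` is stable under composition. -/
  stableUnderComposition : ∀ ⦃U V W : C⦄ (f : U ⟶ V) (g : V ⟶ W), P f → P g → P (f ≫ g)
  /-- (GC4) `P` is `J`-local. -/
  jLocal : ∀ ⦃U V : C⦄ (φ : U ⟶ V) ⦃I : Type u⦄ (Ui : I → C) (ρ : ∀ i, Ui i ⟶ U),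
    IsJCover J Ui ρ → (∀ i, P (ρ i)) → (∀ i, P (ρ i ≫ φ)) → P φ
  /-- (GC5) `J` is `P`-generated: every `J`-covering admits a `P`-refinement. -/
  pGenerated : ∀ ⦃U : C⦄ ⦃A : Type u⦄ (Ua : A → C) (ρ : ∀ a, Ua a ⟶ U),
    IsJCover J Ua ρ → ∃ (I : Type u) (Vi : I → C) (φ : ∀ i, Vi i ⟶ U),
      (∀ i, P (φ i)) ∧ ∀ a, ∃ (i : I) (g : Ua a ⟶ Vi i), g ≫ φ i = ρ a
  /-- (GC6) `P` is locally cartesian. -/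
  locallyCartesian : ∀ ⦃U V : C⦄ (φ : U ⟶ V), P φ →
    ∃ (I : Type u) (Ui : I → C) (ρ : ∀ i, Ui i ⟶ U),
      IsJCover J Ui ρ ∧ (∀ i, P (ρ i)) ∧ ∀ i, CartesianArrow (ρ i ≫ φ)

variable (J : GrothendieckTopology C)

/-- `Subcanonicity` of `J`, phrased concretely. -/
abbrev Subcanonical : Prop := ∀ U : C, Presheaf.IsSheaf J (yoneda.obj U)

/-- The sheaf represented by an object `U` of `C` (for a subcanonical topology). -/
def yo (hs : Subcanonical J) (U : C) : Sheaf J (Type u) :=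
  ⟨yoneda.obj U, hs U⟩

/-- The morphism of representable sheaves induced by a morphism of `C`. -/
def yoMap (hs : Subcanonical J) {U V : C} (f : U ⟶ V) : yo J hs U ⟶ yo J hs V :=
  ⟨yoneda.map f⟩

/-- Two morphisms `f : A ⟶ X` and `g : B ⟶ X` of sheaves have the same image, as a
subobject of `X`: there is a common monomorphism into `X` through which both factor
epimorphically. -/
def SameImage {A B X : Sheaf J (Type u)} (f : A ⟶ X) (g : B ⟶ X) : Prop :=
  ∃ (W : Sheaf J (Type u)) (i : W ⟶ X) (p : A ⟶ W) (q : B ⟶ W),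
    Mono i ∧ Epi p ∧ Epi q ∧ p ≫ i = f ∧ q ≫ i = g

variable (P : MorphismProperty C)

/-- A morphism of sheaves `f : F ⟶ H` is an *open immersion* if for every `U : C` and
every morphism `g : h_U ⟶ H`, the projection `F ×_H h_U ⟶ h_U` is a monomorphism and
there is a family of `P`-morphisms `(Ui i ⟶ U)` such that the image of the induced
morphism `∐ h_{Ui i} ⟶ h_U` coincides, as a subobject of `h_U`, with the image of
`F ×_H h_U ⟶ h_U`. -/
def IsOpenImmersion (hs : Subcanonical J) {F H : Sheaf J (Type u)} (f : F ⟶ H) : Prop :=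
  ∀ (U : C) (g : yo J hs U ⟶ H),
    Mono (pullback.snd f g) ∧
    ∃ (I : Type u) (Ui : I → C) (ρ : ∀ i, Ui i ⟶ U),
      (∀ i, P (ρ i)) ∧
      SameImage J (@Limits.Sigma.desc _ _ _ _ (@HasColimitsOfShape.has_colimit _ _ _ _ (@Sheaf.instHasColimitsOfShape _ _ J _ _ _ _ _ _) _) _ fun i => yoMap J hs (ρ i)) (pullback.snd f g)

/-- An *open atlas* of a sheaf `X`: a family of open immersions from representable
sheaves which is jointly epimorphic. A sheaf admitting an open atlas is an
*elementary scheme*. -/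
def IsElementaryScheme (hs : Subcanonical J) (X : Sheaf J (Type u)) : Prop :=
  ∃ (I : Type u) (Ui : I → C) (p : ∀ i, yo J hs (Ui i) ⟶ X),
    (∀ i, IsOpenImmersion J P hs (p i)) ∧ Epi (@Limits.Sigma.desc _ _ _ _ (@HasColimitsOfShape.has_colimit _ _ _ _ (@Sheaf.instHasColimitsOfShape _ _ J _ _ _ _ _ _) _) _ p)

/-- A morphism of sheaves `f : F ⟶ H` is an *`S`-morphism* if for every `U : C` and
every `g : h_U ⟶ H` there is an open atlas `∐ h_{Ui i} ⟶ F ×_H h_U` such that each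
induced composite `Ui i ⟶ U` (viewed in `C` via the Yoneda embedding) lies in `S`. -/
def IsSMorphism (hs : Subcanonical J) (S : MorphismProperty C)
    {F H : Sheaf J (Type u)} (f : F ⟶ H) : Prop :=
  ∀ (U : C) (g : yo J hs U ⟶ H),
    ∃ (I : Type u) (Ui : I → C) (p : ∀ i, yo J hs (Ui i) ⟶ pullback f g),
      (∀ i, IsOpenImmersion J P hs (p i)) ∧ Epi (@Limits.Sigma.desc _ _ _ _ (@HasColimitsOfShape.has_colimit _ _ _ _ (@Sheaf.instHasColimitsOfShape _ _ J _ _ _ _ _ _) _) _ p) ∧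
      ∀ i, ∃ ρ : Ui i ⟶ U, yoMap J hs ρ = p i ≫ pullback.snd f g ∧ S ρ

/-- A morphism of sheaves `f : F ⟶ H` is *schematic* if for every `U : C` and every
`g : h_U ⟶ H` the pullback `F ×_H h_U` is an elementary scheme. -/
def IsSchematic (hs : Subcanonical J) {F H : Sheaf J (Type u)} (f : F ⟶ H) : Prop :=
  ∀ (U : C) (g : yo J hs U ⟶ H), IsElementaryScheme J P hs (pullback f g)

end GeomCtx


namespace GeomCtxAux

open GeomCtx CategoryTheory.GrothendieckTopology Opposite

variable {C : Type u} [SmallCategory C] {J : GrothendieckTopology C}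

instance hasColimDisc {I : Type u} (X : I → Sheaf J (Type u)) : HasColimit (Discrete.functor X) :=
  @HasColimitsOfShape.has_colimit _ _ _ _ (@Sheaf.instHasColimitsOfShape _ _ J _ _ _ _ _ _) _

lemma shf (X : Sheaf J (Type u)) : Presieve.IsSheaf J X.obj :=
  (CategoryTheory.isSheaf_iff_isSheaf_of_type J X.obj).1 X.property

/-- sheafified image subpresheaf of a sheaf morphism -/
def simg {A X : Sheaf J (Type u)} (φ : A ⟶ X) : Subfunctor X.obj :=
  (Subfunctor.range φ.hom).sheafify J

lemma sheafify_mono' {F : Cᵒᵖ ⥤ Type u} {S T : Subfunctor F} (h : S ≤ T) :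
    S.sheafify J ≤ T.sheafify J := fun _ _ hsx =>
  J.superset_covering (fun _ f hf => h _ hf) hsx

lemma sheafify_le' {F : Cᵒᵖ ⥤ Type u} (hF : Presieve.IsSheaf J F) {S T : Subfunctor F}
    (h : S ≤ T.sheafify J) : S.sheafify J ≤ T.sheafify J := by
  have h2 := sheafify_mono' (J := J) h
  rwa [Subfunctor.sheafify_sheafify _ hF] at h2

lemma pullback_sieveOfSection {F : Cᵒᵖ ⥤ Type u} (S : Subfunctor F) {V V' : C} (e : V' ⟶ V)
    (s : F.obj (op V)) : (S.sieveOfSection s).pullback e = S.sieveOfSection (F.map e.op s) := by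
  ext V'' d
  show F.map (d ≫ e).op s ∈ S.obj _ ↔ F.map d.op (F.map e.op s) ∈ S.obj _
  rw [op_comp, FunctorToTypes.map_comp_apply]


variable (hs : GeomCtx.Subcanonical J)

/-- The morphism from a representable sheaf corresponding to a section. -/
def el {X : Sheaf J (Type u)} {V : C} (x : X.obj.obj (op V)) : yo J hs V ⟶ X :=
  ⟨yonedaEquiv.symm x⟩

lemma el_comp {X Y : Sheaf J (Type u)} {V : C} (x : X.obj.obj (op V)) (φ : X ⟶ Y) :
    el hs x ≫ φ = el hs (φ.hom.app (op V) x) := by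
  apply Sheaf.hom_ext
  show yonedaEquiv.symm x ≫ φ.hom = yonedaEquiv.symm (φ.hom.app (op V) x)
  exact yonedaEquiv_symm_naturality_right _ _ _

lemma el_restrict {X : Sheaf J (Type u)} {V V' : C} (e : V' ⟶ V) (x : X.obj.obj (op V)) :
    yoMap J hs e ≫ el hs x = el hs (X.obj.map e.op x) := by
  apply Sheaf.hom_ext
  show yoneda.map e ≫ yonedaEquiv.symm x = yonedaEquiv.symm (X.obj.map e.op x)
  exact yonedaEquiv_symm_naturality_left _ _ _

lemma el_inj {X : Sheaf J (Type u)} {V : C} : Function.Injective (el hs (X := X) (V := V)) :=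
  fun _ _ hxy => yonedaEquiv.symm.injective (congrArg InducedCategory.Hom.hom hxy)

lemma mem_im_iff {A X : Sheaf J (Type u)} (φ : A ⟶ X) {V : C} (x : X.obj.obj (op V)) :
    x ∈ (Subfunctor.range φ.hom).obj (op V) ↔ ∃ k : yo J hs V ⟶ A, k ≫ φ = el hs x := by
  constructor
  · rintro ⟨a, rfl⟩
    exact ⟨el hs a, el_comp hs a φ⟩
  · rintro ⟨k, hk⟩
    refine ⟨yonedaEquiv k.hom, ?_⟩
    have h1 : (k ≫ φ).hom = (el hs x).hom := congrArg _ hk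
    have h2 : φ.hom.app (op V) (yonedaEquiv k.hom) = yonedaEquiv ((el hs x).hom) :=
      congrArg (fun m => yonedaEquiv (X := V) (F := X.obj) m) h1
    exact h2.trans (yonedaEquiv.apply_symm_apply x)

lemma app_inj_of_mono (hs : GeomCtx.Subcanonical J) {W X : Sheaf J (Type u)} (i : W ⟶ X) [Mono i] (V : C) :
    Function.Injective (i.hom.app (op V)) := by
  intro a b hab
  have h1 : el hs a ≫ i = el hs b ≫ i := by rw [el_comp, el_comp, hab]
  exact el_inj hs ((cancel_mono i).1 h1)

lemma mono_of_app_inj {W X : Sheaf J (Type u)} (i : W ⟶ X)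
    (h : ∀ V : C, Function.Injective (i.hom.app (op V))) : Mono i := by
  have : Mono i.hom := (NatTrans.mono_iff_mono_app _).2 fun V =>
    (mono_iff_injective _).2 (h V.unop)
  exact (sheafToPresheaf J (Type u)).mono_of_mono_map this

/-- The union of the image subpresheaves of a family of sheaf morphisms. -/
def famImage {I : Type u} {X : I → Sheaf J (Type u)} {Y : Sheaf J (Type u)}
    (κ : ∀ i, X i ⟶ Y) : Subfunctor Y.obj where
  obj U := {x | ∃ i, x ∈ (Subfunctor.range (κ i).hom).obj U}
  map := fun f ⦃x⦄ hx => by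
    obtain ⟨i, hi⟩ := hx
    exact ⟨i, (Subfunctor.range (κ i).hom).map f hi⟩

lemma simg_comp_epi {A W X : Sheaf J (Type u)} (p : A ⟶ W) (i : W ⟶ X) [Epi p] :
    simg (p ≫ i) = simg i := by
  apply le_antisymm
  · apply sheafify_mono'
    have h := Subfunctor.range_comp_le p.hom i.hom
    rwa [← ObjectProperty.FullSubcategory.comp_hom] at h
  · apply sheafify_le' (shf X)
    rintro V x ⟨w, rfl⟩
    have hls : Presheaf.IsLocallySurjective J p.hom :=
      (Sheaf.isLocallySurjective_iff_epi p).2 inferInstance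
    refine J.superset_covering ?_ (hls.imageSieve_mem (U := V.unop) w)
    rintro V' e ⟨a, ha⟩
    refine ⟨a, ?_⟩
    calc i.hom.app (op V') (p.hom.app (op V') a)
        = i.hom.app (op V') (W.obj.map e.op w) := congrArg _ ha
      _ = X.obj.map e.op (i.hom.app V w) := FunctorToTypes.naturality i.hom e.op w

lemma simg_eq_of_sameImage {A B X : Sheaf J (Type u)} {f : A ⟶ X} {g : B ⟶ X}
    (h : SameImage J f g) : simg f = simg g := by
  obtain ⟨W, i, p, q, _hm, hp, hq, hpf, hqg⟩ := h
  haveI := hp; haveI := hq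
  rw [← hpf, ← hqg, simg_comp_epi, simg_comp_epi]

lemma sameImage_of_simg_eq {A B X : Sheaf J (Type u)} {f : A ⟶ X} {g : B ⟶ X}
    (h : simg f = simg g) : SameImage J f g := by
  have hmem : ∀ (U) (x : B.obj.obj U), g.hom.app U x ∈ ((Subfunctor.range f.hom).sheafify J).obj U := by
    intro U x
    have h1 : g.hom.app U x ∈ (simg g).obj U :=
      (Subfunctor.range g.hom).le_sheafify J U ⟨x, rfl⟩
    rw [← h] at h1
    exact h1
  let q : B ⟶ Sheaf.image f := ⟨Subfunctor.lift g.hom (by rintro U _ ⟨x, rfl⟩; exact hmem U x)⟩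
  haveI hql : Sheaf.IsLocallySurjective q := by
    constructor
    intro U s
    have h' : (Subfunctor.range f.hom).sheafify J = (Subfunctor.range g.hom).sheafify J := h
    have hsieve : s.1 ∈ ((Subfunctor.range g.hom).sheafify J).obj (op U) := by
      rw [← h']
      exact s.2
    refine J.superset_covering ?_ hsieve
    rintro V e ⟨b, hb⟩
    exact ⟨b, Subtype.ext hb⟩
  refine ⟨Sheaf.image f, Sheaf.imageι f, Sheaf.toImage f, q,
    inferInstance, inferInstance, inferInstance, Sheaf.toImage_ι f, ?_⟩
  apply Sheaf.hom_ext
  exact Subfunctor.lift_ι g.hom (by rintro U _ ⟨x, rfl⟩; exact hmem U x)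

lemma simg_desc {I : Type u} {X : I → Sheaf J (Type u)} {Y : Sheaf J (Type u)}
    (κ : ∀ i, X i ⟶ Y) : simg (Limits.Sigma.desc κ) = (famImage κ).sheafify J := by
  apply le_antisymm
  · apply sheafify_le' (shf Y)
    have hSsheaf : Presieve.IsSheaf J ((famImage κ).sheafify J).toFunctor :=
      (famImage κ).sheafify_isSheaf (shf Y)
    let W : Sheaf J (Type u) :=
      ⟨((famImage κ).sheafify J).toFunctor, (CategoryTheory.isSheaf_iff_isSheaf_of_type _ _).2 hSsheaf⟩
    let ιW : W ⟶ Y := ⟨((famImage κ).sheafify J).ι⟩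
    let lam : ∀ i, X i ⟶ W := fun i =>
      ⟨Subfunctor.lift (κ i).hom (by rintro U _ ⟨x, rfl⟩; exact (famImage κ).le_sheafify J U ⟨i, x, rfl⟩)⟩
    have hfac : Limits.Sigma.desc lam ≫ ιW = Limits.Sigma.desc κ := by
      apply Limits.Sigma.hom_ext
      intro i
      rw [← Category.assoc, Limits.Sigma.ι_desc, Limits.Sigma.ι_desc]
      apply Sheaf.hom_ext
      exact Subfunctor.lift_ι (κ i).hom (by rintro U _ ⟨x, rfl⟩; exact (famImage κ).le_sheafify J U ⟨i, x, rfl⟩)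
    rintro V x ⟨a, rfl⟩
    have h1 : (Limits.Sigma.desc κ).hom.app V a
        = ((famImage κ).sheafify J).ι.app V ((Limits.Sigma.desc lam).hom.app V a) := by
      rw [← hfac]
      rfl
    rw [h1]
    exact ((Limits.Sigma.desc lam).hom.app V a).2
  · apply sheafify_mono'
    rintro V x ⟨i, b, rfl⟩
    refine ⟨(Limits.Sigma.ι X i).hom.app V b, ?_⟩
    have hι : Limits.Sigma.ι X i ≫ Limits.Sigma.desc κ = κ i := Limits.Sigma.ι_desc κ i
    have h1 : (Limits.Sigma.ι X i ≫ Limits.Sigma.desc κ).hom.app V b = (κ i).hom.app V b := by rw [hι]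
    exact h1

lemma im_comp_le {A X Y : Sheaf J (Type u)} (t : A ⟶ X) (m : X ⟶ Y)
    {S : Subfunctor X.obj} {T : Subfunctor Y.obj}
    (ht : Subfunctor.range t.hom ≤ S.sheafify J)
    (hST : ∀ (V : Cᵒᵖ) (x : X.obj.obj V), x ∈ S.obj V → m.hom.app V x ∈ T.obj V) :
    Subfunctor.range (t ≫ m).hom ≤ T.sheafify J := by
  rintro V y ⟨a, rfl⟩
  have hx : t.hom.app V a ∈ (S.sheafify J).obj V := ht V ⟨a, rfl⟩
  refine J.superset_covering ?_ hx
  intro V' e he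
  show Y.obj.map e.op ((t ≫ m).hom.app V a) ∈ T.obj (op V')
  have h1 : Y.obj.map e.op ((t ≫ m).hom.app V a)
      = m.hom.app (op V') (X.obj.map e.op (t.hom.app V a)) :=
    (FunctorToTypes.naturality m.hom e.op (t.hom.app V a)).symm
  rw [h1]
  exact hST _ _ he

lemma factor_of_le_simg (hs : GeomCtx.Subcanonical J) {B W X : Sheaf J (Type u)} (i : W ⟶ X) [Mono i] (t : B ⟶ X)
    (ht : Subfunctor.range t.hom ≤ simg i) : ∃ q : B ⟶ W, q ≫ i = t := by
  haveI : Mono i.hom := (NatTrans.mono_iff_mono_app _).2 fun V =>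
    (mono_iff_injective _).2 (app_inj_of_mono hs i V.unop)
  have hsheaf : Presieve.IsSheaf J (Subfunctor.range i.hom).toFunctor :=
    Presieve.isSheaf_iso J (asIso (Subfunctor.toRange i.hom)) (shf W)
  have heq : Subfunctor.range i.hom = simg i := (Subfunctor.range i.hom).eq_sheafify (shf X) hsheaf
  rw [← heq] at ht
  refine ⟨⟨Subfunctor.lift t.hom (by rintro U _ ⟨x, rfl⟩; exact ht U ⟨x, rfl⟩) ≫ inv (Subfunctor.toRange i.hom)⟩, ?_⟩
  apply Sheaf.hom_ext
  show (Subfunctor.lift t.hom _ ≫ inv (Subfunctor.toRange i.hom)) ≫ i.hom = t.hom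
  have h2 : inv (Subfunctor.toRange i.hom) ≫ i.hom = (Subfunctor.range i.hom).ι := by
    rw [IsIso.inv_comp_eq, Subfunctor.toRange_ι]
  rw [Category.assoc, h2]
  exact Subfunctor.lift_ι _ _

lemma mono_of_rep {F G : Sheaf J (Type u)} (f : F ⟶ G)
    (H : ∀ (U : C) (u : yo J hs U ⟶ G), Mono (pullback.snd f u)) : Mono f := by
  apply mono_of_app_inj
  intro V x y hxy
  set u : yo J hs V ⟶ G := el hs (f.hom.app (op V) x) with hu
  have hx : el hs x ≫ f = u := el_comp hs x f
  have hy : el hs y ≫ f = u := by rw [el_comp hs y f, hu, hxy]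
  haveI := H V u
  have hab : pullback.lift (el hs x) (𝟙 _) (by rw [hx, Category.id_comp])
      = pullback.lift (el hs y) (𝟙 _) (by rw [hy, Category.id_comp]) := by
    rw [← cancel_mono (pullback.snd f u)]
    rw [pullback.lift_snd, pullback.lift_snd]
  have h2 : el hs x = el hs y := by
    have h3 := congrArg (· ≫ pullback.fst f u) hab
    rwa [pullback.lift_fst, pullback.lift_fst] at h3
  exact el_inj hs h2

end GeomCtxAux


open GeomCtx in
/-- Open immersions of sheaves in a geometric context are stable under composition. -/
theorem statement3 {C : Type u} [SmallCategory C] (J : GrothendieckTopology C)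
    (P : MorphismProperty C) (hGC : IsGeometricContext J P)
    {F G H : Sheaf J (Type u)} (f : F ⟶ G) (g : G ⟶ H)
    (hf : IsOpenImmersion J P hGC.subcanonical f)
    (hg : IsOpenImmersion J P hGC.subcanonical g) :
    IsOpenImmersion J P hGC.subcanonical (f ≫ g) := by
  classical
  have hs := hGC.subcanonical
  haveI hmf : Mono f := GeomCtxAux.mono_of_rep hs f (fun V u => (hf V u).1)
  intro U h
  obtain ⟨hmono₂, A, Va, ψ, hψP, hψim⟩ := hg U h
  haveI := hmono₂
  have he₀ := pullbackRightPullbackFstIso_hom_snd g h f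
  constructor
  · have hsnd : pullback.snd (f ≫ g) h
        = (pullbackRightPullbackFstIso g h f).inv
            ≫ (pullback.snd f (pullback.fst g h) ≫ pullback.snd g h) := by
      rw [← he₀, Iso.inv_hom_id_assoc]
    rw [hsnd]
    infer_instance
  · -- image part
    have hsimg_g : (GeomCtxAux.famImage (fun a => yoMap J hs (ψ a))).sheafify J
        = GeomCtxAux.simg (pullback.snd g h) := by
      rw [← GeomCtxAux.simg_desc]
      exact GeomCtxAux.simg_eq_of_sameImage hψim
    have hfac : ∀ a, ∃ qa : yo J hs (Va a) ⟶ pullback g h,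
        qa ≫ pullback.snd g h = yoMap J hs (ψ a) := by
      intro a
      apply GeomCtxAux.factor_of_le_simg hs
      show Subfunctor.range (yoMap J hs (ψ a)).hom
        ≤ GeomCtxAux.simg (pullback.snd g h)
      rw [← hsimg_g]
      have hstep : Subfunctor.range (yoMap J hs (ψ a)).hom
          ≤ GeomCtxAux.famImage (fun a => yoMap J hs (ψ a)) := fun V x hx => ⟨a, hx⟩
      exact le_trans hstep (Subfunctor.le_sheafify J _)
    choose q hq using hfac
    have h2 : ∀ a, ∃ (Ba : Type u) (Wb : Ba → C) (σ : ∀ b, Wb b ⟶ Va a),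
        (∀ b, P (σ b)) ∧ SameImage J (Limits.Sigma.desc fun b => yoMap J hs (σ b))
          (pullback.snd f (q a ≫ pullback.fst g h)) :=
      fun a => (hf (Va a) (q a ≫ pullback.fst g h)).2
    choose Ba Wb σ hσP hσim using h2
    refine ⟨(a : A) × Ba a, fun i => Wb i.1 i.2, fun i => σ i.1 i.2 ≫ ψ i.1,
      fun i => hGC.stableUnderComposition _ _ (hσP i.1 i.2) (hψP i.1), ?_⟩
    apply GeomCtxAux.sameImage_of_simg_eq
    rw [GeomCtxAux.simg_desc]
    have hsimg_a : ∀ a, (GeomCtxAux.famImage (fun b => yoMap J hs (σ a b))).sheafify J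
        = GeomCtxAux.simg (pullback.snd f (q a ≫ pullback.fst g h)) := by
      intro a
      rw [← GeomCtxAux.simg_desc]
      exact GeomCtxAux.simg_eq_of_sameImage (hσim a)
    have hyoComp : ∀ (a : A) (b : Ba a), yoMap J hs (σ a b ≫ ψ a)
        = yoMap J hs (σ a b) ≫ yoMap J hs (ψ a) := by
      intro a b
      apply Sheaf.hom_ext
      show yoneda.map (σ a b ≫ ψ a) = yoneda.map (σ a b) ≫ yoneda.map (ψ a)
      rw [yoneda.map_comp]
    have hjl : ∀ a, ∃ jl : pullback f (q a ≫ pullback.fst g h) ⟶ pullback f (pullback.fst g h),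
        jl ≫ pullback.fst f (pullback.fst g h) = pullback.fst f (q a ≫ pullback.fst g h) ∧
        jl ≫ pullback.snd f (pullback.fst g h)
          = pullback.snd f (q a ≫ pullback.fst g h) ≫ q a := by
      intro a
      refine ⟨pullback.lift (pullback.fst f (q a ≫ pullback.fst g h))
        (pullback.snd f (q a ≫ pullback.fst g h) ≫ q a) ?_,
        pullback.lift_fst _ _ _, pullback.lift_snd _ _ _⟩
      rw [pullback.condition, Category.assoc]
    choose jl hjlf hjls using hjl
    have hjsnd : ∀ a, (jl a ≫ (pullbackRightPullbackFstIso g h f).hom) ≫ pullback.snd (f ≫ g) h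
        = pullback.snd f (q a ≫ pullback.fst g h) ≫ yoMap J hs (ψ a) := by
      intro a
      rw [Category.assoc, he₀, ← Category.assoc, hjls, Category.assoc, hq]
    -- local image comparison, used in both directions
    have hK2 : ∀ a, Subfunctor.range ((pullback.snd f (q a ≫ pullback.fst g h)) ≫ yoMap J hs (ψ a)).hom
        ≤ (GeomCtxAux.famImage (fun i : (a : A) × Ba a =>
            yoMap J hs (σ i.1 i.2 ≫ ψ i.1))).sheafify J := by
      intro a
      refine GeomCtxAux.im_comp_le _ _
        (S := GeomCtxAux.famImage (fun b => yoMap J hs (σ a b))) ?_ ?_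
      · rw [hsimg_a a]
        exact Subfunctor.le_sheafify J _
      · rintro V x ⟨b, u, hu⟩
        refine ⟨⟨a, b⟩, u, ?_⟩
        show (yoMap J hs (σ a b ≫ ψ a)).hom.app V u = (yoMap J hs (ψ a)).hom.app V x
        rw [hyoComp a b]
        show (yoMap J hs (ψ a)).hom.app V ((yoMap J hs (σ a b)).hom.app V u)
          = (yoMap J hs (ψ a)).hom.app V x
        rw [hu]
    have hK1 : ∀ (i : (a : A) × Ba a), Subfunctor.range (yoMap J hs (σ i.1 i.2 ≫ ψ i.1)).hom
        ≤ GeomCtxAux.simg (pullback.snd (f ≫ g) h) := by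
      rintro ⟨a, b⟩
      have h1 : Subfunctor.range (yoMap J hs (σ a b)).hom
          ≤ (Subfunctor.range (pullback.snd f (q a ≫ pullback.fst g h)).hom).sheafify J := by
        have hstep : Subfunctor.range (yoMap J hs (σ a b)).hom
            ≤ GeomCtxAux.famImage (fun b => yoMap J hs (σ a b)) := fun V x hx => ⟨b, hx⟩
        have h0 : Subfunctor.range (yoMap J hs (σ a b)).hom
            ≤ (GeomCtxAux.famImage (fun b => yoMap J hs (σ a b))).sheafify J :=
          le_trans hstep (Subfunctor.le_sheafify J _)
        rwa [hsimg_a a] at h0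
      have h2 := GeomCtxAux.im_comp_le (yoMap J hs (σ a b)) (yoMap J hs (ψ a))
        (T := Subfunctor.range ((pullback.snd f (q a ≫ pullback.fst g h))
          ≫ yoMap J hs (ψ a)).hom) h1
        (fun V x hx => by
          obtain ⟨u, hu⟩ := hx
          refine ⟨u, ?_⟩
          show (yoMap J hs (ψ a)).hom.app V
              ((pullback.snd f (q a ≫ pullback.fst g h)).hom.app V u)
            = (yoMap J hs (ψ a)).hom.app V x
          rw [hu])
      rw [hyoComp a b]
      refine le_trans h2 ?_
      apply GeomCtxAux.sheafify_mono'
      rintro V x ⟨u, hu⟩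
      refine ⟨((jl a ≫ (pullbackRightPullbackFstIso g h f).hom)).hom.app V u, ?_⟩
      have h3 : ((jl a ≫ (pullbackRightPullbackFstIso g h f).hom)
          ≫ pullback.snd (f ≫ g) h).hom.app V u
          = ((pullback.snd f (q a ≫ pullback.fst g h)) ≫ yoMap J hs (ψ a)).hom.app V u := by
        rw [hjsnd a]
      exact h3.trans hu
    apply le_antisymm
    · apply GeomCtxAux.sheafify_le' (GeomCtxAux.shf _)
      rintro V x ⟨i, hx⟩
      exact hK1 i V hx
    · apply GeomCtxAux.sheafify_le' (GeomCtxAux.shf _)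
      rintro V y ⟨t, rfl⟩
      set μ : pullback (f ≫ g) h ⟶ pullback g h :=
        (pullbackRightPullbackFstIso g h f).inv ≫ pullback.snd f (pullback.fst g h) with hμ
      have hw : (pullback.snd g h).hom.app V (μ.hom.app V t)
          ∈ (GeomCtxAux.simg (pullback.snd g h)).obj V :=
        (Subfunctor.range _).le_sheafify J V ⟨_, rfl⟩
      rw [← hsimg_g] at hw
      have hclaim : (GeomCtxAux.famImage q).sieveOfSection (μ.hom.app V t) ∈ J V.unop := by
        refine J.superset_covering ?_ hw
        intro V' e he
        obtain ⟨a, z, hz⟩ := he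
        refine ⟨a, z, ?_⟩
        apply GeomCtxAux.app_inj_of_mono hs (pullback.snd g h)
        have h1 : (pullback.snd g h).hom.app (Opposite.op V') ((q a).hom.app (Opposite.op V') z)
            = (yoMap J hs (ψ a)).hom.app (Opposite.op V') z := by
          rw [← hq a]
          rfl
        rw [h1, hz]
        exact (FunctorToTypes.naturality (pullback.snd g h).hom e.op _).symm
      show (GeomCtxAux.famImage _).sieveOfSection ((pullback.snd (f ≫ g) h).hom.app V t)
        ∈ J V.unop
      refine J.transitive hclaim _ ?_
      intro V' e he
      obtain ⟨a, z, hz⟩ := he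
      rw [GeomCtxAux.pullback_sieveOfSection]
      have helw : GeomCtxAux.el hs t ≫ μ = GeomCtxAux.el hs (μ.hom.app V t) :=
        GeomCtxAux.el_comp hs t μ
      have hAsnd : (yoMap J hs e ≫ (GeomCtxAux.el hs t ≫ (pullbackRightPullbackFstIso g h f).inv))
          ≫ pullback.snd f (pullback.fst g h) = GeomCtxAux.el hs z ≫ q a := by
        have e1 : (GeomCtxAux.el hs t ≫ (pullbackRightPullbackFstIso g h f).inv)
            ≫ pullback.snd f (pullback.fst g h) = GeomCtxAux.el hs (μ.hom.app V t) := by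
          rw [Category.assoc]
          exact helw
        rw [Category.assoc, e1, GeomCtxAux.el_restrict, GeomCtxAux.el_comp hs z (q a), hz]
      have hcond : ((yoMap J hs e ≫ (GeomCtxAux.el hs t ≫ (pullbackRightPullbackFstIso g h f).inv))
          ≫ pullback.fst f (pullback.fst g h)) ≫ f
          = GeomCtxAux.el hs z ≫ (q a ≫ pullback.fst g h) := by
        rw [Category.assoc, pullback.condition, ← Category.assoc, hAsnd, Category.assoc]
      set L : yo J hs V' ⟶ pullback f (q a ≫ pullback.fst g h) :=
        pullback.lift ((yoMap J hs e ≫ (GeomCtxAux.el hs t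
            ≫ (pullbackRightPullbackFstIso g h f).inv)) ≫ pullback.fst f (pullback.fst g h))
          (GeomCtxAux.el hs z) hcond with hL
      have hLjl : L ≫ jl a
          = yoMap J hs e ≫ (GeomCtxAux.el hs t ≫ (pullbackRightPullbackFstIso g h f).inv) := by
        apply pullback.hom_ext
        · rw [Category.assoc, hjlf a, hL, pullback.lift_fst]
        · rw [Category.assoc, hjls a, ← Category.assoc, hL, pullback.lift_snd, hAsnd]
      have hLel : L ≫ (pullback.snd f (q a ≫ pullback.fst g h) ≫ yoMap J hs (ψ a))
          = GeomCtxAux.el hs ((yo J hs U).obj.map e.op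
              ((pullback.snd (f ≫ g) h).hom.app V t)) := by
        calc L ≫ (pullback.snd f (q a ≫ pullback.fst g h) ≫ yoMap J hs (ψ a))
            = ((L ≫ jl a) ≫ (pullbackRightPullbackFstIso g h f).hom)
              ≫ pullback.snd (f ≫ g) h := by
              rw [← hjsnd a]
              simp only [Category.assoc]
          _ = ((yoMap J hs e ≫ (GeomCtxAux.el hs t ≫ (pullbackRightPullbackFstIso g h f).inv))
              ≫ (pullbackRightPullbackFstIso g h f).hom) ≫ pullback.snd (f ≫ g) h := by
              rw [hLjl]
          _ = (yoMap J hs e ≫ GeomCtxAux.el hs t) ≫ pullback.snd (f ≫ g) h := by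
              simp only [Category.assoc, Iso.inv_hom_id, Category.comp_id]
          _ = GeomCtxAux.el hs ((yo J hs U).obj.map e.op
              ((pullback.snd (f ≫ g) h).hom.app V t)) := by
              rw [Category.assoc, GeomCtxAux.el_comp hs t (pullback.snd (f ≫ g) h),
                GeomCtxAux.el_restrict]
      have himg : (yo J hs U).obj.map e.op ((pullback.snd (f ≫ g) h).hom.app V t)
          ∈ (Subfunctor.range ((pullback.snd f (q a ≫ pullback.fst g h))
              ≫ yoMap J hs (ψ a)).hom).obj (Opposite.op V') :=
        (GeomCtxAux.mem_im_iff hs _ _).2 ⟨L, hLel⟩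
      exact hK2 a (Opposite.op V') himg
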